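/- Let D ≥ 1, M ≥ 3, u' ∈ ℝ^D and θ' > 0, and let f(ξ) = Σ_{|α| ≤ M} f_α 𝓗_{θ',α}(v') with v' = (ξ − u')/√θ'. Assume f_{e_i} = 0 for all i = 1,…,D (so that the mean velocity of f equals u'). Then for each j ∈ {1,…,D}, the heat flux q_j := (1/2) ∫_{ℝ^D} |ξ − u'|² (ξ_j − u'_j) f(ξ) dξ satisfies q_j = 2 f_{3e_j} + Σ_{d=1}^D f_{e_j + 2e_d}. -/

import Mathlib

open MeasureTheory

/-- The probabilists' Hermite polynomial `He n`, evaluated at a real number. -/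
noncomputable def He (n : ℕ) (x : ℝ) : ℝ :=
  Polynomial.aeval x (Polynomial.hermite n)

/-- The basis function `𝓗_{θ,α}(v) = ∏_d (2π)^(-1/2) θ^(-(α_d+1)/2) He_{α_d}(v_d) e^(-v_d²/2)`. -/
noncomputable def Hb {D : ℕ} (θ : ℝ) (α : Fin D → ℕ) (v : Fin D → ℝ) : ℝ :=
  ∏ d, ((Real.sqrt (2 * Real.pi))⁻¹ * θ ^ (-(((α d : ℝ) + 1) / 2)) * He (α d) (v d) *
    Real.exp (-(v d) ^ 2 / 2))


/-- The finite set of multi-indices `α : Fin D → ℕ` with `|α| ≤ M`. -/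
noncomputable def multiIndices (D M : ℕ) : Finset (Fin D → ℕ) :=
  ((Finset.univ : Finset (Fin D → Fin (M + 1))).image (fun a => fun d => (a d : ℕ))).filter
    (fun α => (∑ d, α d) ≤ M)

/-- The normalization constant `C_{θ,α} = (2π)^{D/2} θ^{D+|α|} / (α₁!⋯α_D!)`. -/
noncomputable def Cc (D : ℕ) (θ : ℝ) (α : Fin D → ℕ) : ℝ :=
  (2 * Real.pi) ^ ((D : ℝ) / 2) * θ ^ (D + ∑ d, α d) / ∏ d, (Nat.factorial (α d) : ℝ)

/-!
After the substitution `ξ = u' + √θ' v` every term of the integrand factorises over the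
coordinates, and each one-dimensional factor is a normalised moment
`(2π)^(-1/2) ∫ v^k He_n(v) e^(-v²/2) dv`. The recurrence `v He_{n+1} = He_{n+2} + (n+1) He_n`
shows that these moments vanish unless `n ≤ k` and `n ≡ k (mod 2)`, and equal `k!` for `n = k`.
Expanding `|v|² v_j = Σ_i v^(e_j + 2e_i)`, the only coefficients seen by the monomial
`v^(e_j + 2e_i)` are `f_{e_j + 2e_i}`, with weight `3! = 6` if `i = j` and `1!·2! = 2` otherwise,
and `f_{e_j}`, which vanishes by assumption.
-/

open Polynomial Real
open scoped Nat

theorem derivative_hermite_succ (n : ℕ) :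
    derivative (hermite (n + 1)) = (n + 1 : ℤ[X]) * hermite n := by
  induction n with
  | zero => simp [hermite_zero]
  | succ n ih =>
    rw [hermite_succ (n + 1), derivative_sub, derivative_mul, derivative_X, ih, hermite_succ n,
      derivative_mul]
    simp only [derivative_add, derivative_one, derivative_natCast, add_zero]
    push_cast
    ring

theorem He_zero (x : ℝ) : He 0 x = 1 := by simp [He]

theorem He_one (x : ℝ) : He 1 x = x := by simp [He]

theorem He_succ (n : ℕ) (x : ℝ) :
    He (n + 1) x = x * He n x - aeval x (derivative (hermite n)) := by
  simp [He, hermite_succ]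

theorem mul_He_succ (n : ℕ) (x : ℝ) :
    x * He (n + 1) x = He (n + 2) x + (n + 1) * He n x := by
  rw [He_succ (n + 1), derivative_hermite_succ]
  simp [He]

theorem hasDerivAt_neg_He_mul_exp (n : ℕ) (x : ℝ) :
    HasDerivAt (fun y => -(He n y * exp (-y ^ 2 / 2))) (He (n + 1) x * exp (-x ^ 2 / 2)) x := by
  have hHe : HasDerivAt (He n) (aeval x (derivative (hermite n))) x :=
    (hermite n).hasDerivAt_aeval x
  have hexp : HasDerivAt (fun y : ℝ => exp (-y ^ 2 / 2)) (-x * exp (-x ^ 2 / 2)) x := by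
    have hsq : HasDerivAt (fun y : ℝ => -y ^ 2 / 2) (-x) x :=
      ((hasDerivAt_pow 2 x).neg.div_const 2).congr_deriv (by ring_nf)
    simpa [mul_comm] using hsq.exp
  exact (hHe.mul hexp).neg.congr_deriv (by rw [He_succ]; ring)

theorem integrable_aeval_mul_exp_neg_sq_div_two (p : ℤ[X]) :
    Integrable fun x : ℝ => aeval x p * exp (-x ^ 2 / 2) := by
  simp_rw [aeval_eq_sum_range, Finset.sum_mul]
  refine integrable_finsetSum _ fun i _ => ?_
  have h := integrable_rpow_mul_exp_neg_mul_sq (b := 1 / 2) (by norm_num)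
    (s := i) (by linarith [(Nat.cast_nonneg i : (0 : ℝ) ≤ i)])
  simp_rw [rpow_natCast] at h
  have hfun : (fun x : ℝ => p.coeff i • x ^ i * exp (-x ^ 2 / 2)) =
      fun x => (p.coeff i : ℝ) * (x ^ i * exp (-(1 / 2) * x ^ 2)) := by
    funext x
    rw [zsmul_eq_mul]
    ring_nf
  rw [hfun]
  exact h.const_mul _

theorem integrable_pow_mul_He_mul_exp (k n : ℕ) :
    Integrable fun x : ℝ => x ^ k * He n x * exp (-x ^ 2 / 2) := by
  have h := integrable_aeval_mul_exp_neg_sq_div_two (X ^ k * hermite n)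
  simp only [map_mul, map_pow, aeval_X] at h
  exact h

noncomputable def hermiteMoment (k n : ℕ) : ℝ :=
  (√(2 * π))⁻¹ * ∫ x : ℝ, x ^ k * He n x * exp (-x ^ 2 / 2)

theorem hermiteMoment_zero_left (n : ℕ) : hermiteMoment 0 n = if n = 0 then 1 else 0 := by
  rcases n with _ | n
  · have hgauss : ∫ x : ℝ, exp (-x ^ 2 / 2) = √(2 * π) := by
      convert integral_gaussian (1 / 2) using 2 <;> ring_nf
    simp only [hermiteMoment, pow_zero, He_zero, one_mul, hgauss, if_pos]
    field_simp
  · simp only [hermiteMoment, pow_zero, one_mul, Nat.succ_ne_zero, if_false]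
    rw [integral_eq_zero_of_hasDerivAt_of_integrable (hasDerivAt_neg_He_mul_exp n)
      (by simpa using integrable_pow_mul_He_mul_exp 0 (n + 1))
      (by simpa using (integrable_pow_mul_He_mul_exp 0 n).neg), mul_zero]

theorem hermiteMoment_succ_zero (k : ℕ) : hermiteMoment (k + 1) 0 = hermiteMoment k 1 := by
  simp only [hermiteMoment, pow_succ, He_zero, He_one, mul_one]

theorem hermiteMoment_succ_succ (k n : ℕ) :
    hermiteMoment (k + 1) (n + 1) = hermiteMoment k (n + 2) + (n + 1) * hermiteMoment k n := by
  have hpt : (fun x : ℝ => x ^ (k + 1) * He (n + 1) x * exp (-x ^ 2 / 2)) = fun x =>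
      x ^ k * He (n + 2) x * exp (-x ^ 2 / 2) + (n + 1) * (x ^ k * He n x * exp (-x ^ 2 / 2)) := by
    funext x
    rw [pow_succ, mul_assoc (x ^ k), mul_He_succ]
    ring
  simp only [hermiteMoment, hpt]
  rw [integral_add (integrable_pow_mul_He_mul_exp k (n + 2))
    ((integrable_pow_mul_He_mul_exp k n).const_mul _), integral_const_mul]
  ring

theorem hermiteMoment_eq_zero {k n : ℕ} (h : k < n ∨ Odd (k + n)) : hermiteMoment k n = 0 := by
  induction k generalizing n with
  | zero =>
    rw [hermiteMoment_zero_left, if_neg]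
    rintro rfl
    simp at h
  | succ k ih =>
    rcases n with _ | n
    · rw [hermiteMoment_succ_zero, ih]
      simp only [Nat.odd_iff] at h ⊢
      omega
    · rw [hermiteMoment_succ_succ, ih, ih, mul_zero, add_zero] <;>
        simp only [Nat.odd_iff] at h ⊢ <;> omega

theorem hermiteMoment_self (k : ℕ) : hermiteMoment k k = k ! := by
  induction k with
  | zero => simp [hermiteMoment_zero_left]
  | succ k ih =>
    rw [hermiteMoment_succ_succ, ih, hermiteMoment_eq_zero (by omega), Nat.factorial_succ]
    push_cast
    ring

noncomputable def hermiteFactor (θ : ℝ) (n : ℕ) (y : ℝ) : ℝ :=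
  (√(2 * π))⁻¹ * θ ^ (-(((n : ℝ) + 1) / 2)) * He n y * exp (-y ^ 2 / 2)

theorem Hb_eq_prod_hermiteFactor {D : ℕ} (θ : ℝ) (α : Fin D → ℕ) (v : Fin D → ℝ) :
    Hb θ α v = ∏ d, hermiteFactor θ (α d) (v d) :=
  rfl

section Rescaling

variable {θ : ℝ} (u : ℝ) (k n : ℕ)

theorem pow_sub_mul_hermiteFactor_eq (hθ : 0 < θ) (x : ℝ) :
    (x - u) ^ k * hermiteFactor θ n ((x - u) / √θ) =
      (√θ ^ k * θ ^ (-(((n : ℝ) + 1) / 2)) * (√(2 * π))⁻¹) *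
        (((x - u) / √θ) ^ k * He n ((x - u) / √θ) * exp (-((x - u) / √θ) ^ 2 / 2)) := by
  have hx : x - u = √θ * ((x - u) / √θ) := by field_simp
  conv_lhs => rw [hx, mul_pow]
  rw [← hx, hermiteFactor]
  ring

theorem integrable_pow_sub_mul_hermiteFactor (hθ : 0 < θ) :
    Integrable fun x => (x - u) ^ k * hermiteFactor θ n ((x - u) / √θ) := by
  simp_rw [pow_sub_mul_hermiteFactor_eq u k n hθ]
  exact (((integrable_pow_mul_He_mul_exp k n).const_mul _).comp_div
    (sqrt_pos.2 hθ).ne').comp_sub_right u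

theorem integral_pow_sub_mul_hermiteFactor (hθ : 0 < θ) :
    ∫ x, (x - u) ^ k * hermiteFactor θ n ((x - u) / √θ) =
      θ ^ (((k : ℝ) - n) / 2) * hermiteMoment k n := by
  have hpow : √θ * (√θ ^ k * θ ^ (-(((n : ℝ) + 1) / 2))) = θ ^ (((k : ℝ) - n) / 2) := by
    rw [sqrt_eq_rpow, ← rpow_natCast, ← rpow_mul hθ.le, ← rpow_add hθ, ← rpow_add hθ]
    ring_nf
  simp_rw [pow_sub_mul_hermiteFactor_eq u k n hθ]
  rw [integral_sub_right_eq_self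
      (fun x => _ * ((x / √θ) ^ k * He n (x / √θ) * exp (-(x / √θ) ^ 2 / 2))) u,
    Measure.integral_comp_div (fun y => _ * (y ^ k * He n y * exp (-y ^ 2 / 2))),
    integral_const_mul, abs_of_pos (sqrt_pos.2 hθ), smul_eq_mul, hermiteMoment, ← hpow]
  ring

end Rescaling

section MultiIndex

variable {D : ℕ} {θ : ℝ} (u : Fin D → ℝ)

theorem prod_pow_sub_mul_Hb_eq (κ α : Fin D → ℕ) (ξ : Fin D → ℝ) :
    (∏ d, (ξ d - u d) ^ κ d) * Hb θ α (fun d => (ξ d - u d) / √θ) =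
      ∏ d, (ξ d - u d) ^ κ d * hermiteFactor θ (α d) ((ξ d - u d) / √θ) := by
  rw [Hb_eq_prod_hermiteFactor, ← Finset.prod_mul_distrib]

theorem integrable_prod_pow_sub_mul_Hb (κ α : Fin D → ℕ) (hθ : 0 < θ) :
    Integrable fun ξ : Fin D → ℝ =>
      (∏ d, (ξ d - u d) ^ κ d) * Hb θ α (fun d => (ξ d - u d) / √θ) := by
  simp_rw [prod_pow_sub_mul_Hb_eq]
  exact Integrable.fintype_prod
    (f := fun d x => (x - u d) ^ κ d * hermiteFactor θ (α d) ((x - u d) / √θ))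
    fun d => integrable_pow_sub_mul_hermiteFactor (u d) (κ d) (α d) hθ

theorem integral_prod_pow_sub_mul_Hb (κ α : Fin D → ℕ) (hθ : 0 < θ) :
    ∫ ξ : Fin D → ℝ,
        (∏ d, (ξ d - u d) ^ κ d) * Hb θ α (fun d => (ξ d - u d) / √θ) =
      ∏ d, θ ^ (((κ d : ℝ) - α d) / 2) * hermiteMoment (κ d) (α d) := by
  simp_rw [prod_pow_sub_mul_Hb_eq]
  rw [integral_fintype_prod_volume_eq_prod
    (fun d x => (x - u d) ^ κ d * hermiteFactor θ (α d) ((x - u d) / √θ))]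
  exact Finset.prod_congr rfl fun d _ => integral_pow_sub_mul_hermiteFactor (u d) (κ d) (α d) hθ

theorem integral_prod_pow_sub_mul_Hb_self (κ : Fin D → ℕ) (hθ : 0 < θ) :
    ∫ ξ : Fin D → ℝ,
        (∏ d, (ξ d - u d) ^ κ d) * Hb θ κ (fun d => (ξ d - u d) / √θ) =
      ∏ d, ((κ d)! : ℝ) := by
  simp [integral_prod_pow_sub_mul_Hb u κ κ hθ, hermiteMoment_self]

theorem integral_prod_pow_sub_mul_Hb_eq_zero (κ α : Fin D → ℕ) (hθ : 0 < θ)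
    (h : ∃ d, κ d < α d ∨ Odd (κ d + α d)) :
    ∫ ξ : Fin D → ℝ,
        (∏ d, (ξ d - u d) ^ κ d) * Hb θ α (fun d => (ξ d - u d) / √θ) = 0 := by
  obtain ⟨d, hd⟩ := h
  rw [integral_prod_pow_sub_mul_Hb u κ α hθ,
    Finset.prod_eq_zero (Finset.mem_univ d) (by rw [hermiteMoment_eq_zero hd, mul_zero])]

theorem integral_sum_prod_pow_sub_mul_sum_Hb (hθ : 0 < θ) {ι : Type*} (I : Finset ι)
    (κ : ι → Fin D → ℕ) (S : Finset (Fin D → ℕ)) (c : (Fin D → ℕ) → ℝ) :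
    ∫ ξ : Fin D → ℝ, (∑ i ∈ I, ∏ d, (ξ d - u d) ^ κ i d) *
        ∑ α ∈ S, c α * Hb θ α (fun d => (ξ d - u d) / √θ) =
      ∑ i ∈ I, ∑ α ∈ S, c α *
        ∫ ξ : Fin D → ℝ, (∏ d, (ξ d - u d) ^ κ i d) *
          Hb θ α (fun d => (ξ d - u d) / √θ) := by
  simp_rw [Finset.sum_mul, Finset.mul_sum, mul_left_comm _ (c _)]
  rw [integral_finsetSum _ fun i _ => integrable_finsetSum _ fun α _ =>
    (integrable_prod_pow_sub_mul_Hb u (κ i) α hθ).const_mul _]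
  refine Finset.sum_congr rfl fun i _ => ?_
  rw [integral_finsetSum _ fun α _ => (integrable_prod_pow_sub_mul_Hb u (κ i) α hθ).const_mul _]
  simp_rw [integral_const_mul]

end MultiIndex

theorem mem_multiIndices {D M : ℕ} {α : Fin D → ℕ} :
    α ∈ multiIndices D M ↔ ∑ d, α d ≤ M := by
  refine ⟨fun h => (Finset.mem_filter.1 h).2, fun h => Finset.mem_filter.2 ⟨?_, h⟩⟩
  have hle : ∀ d, α d < M + 1 := fun d =>
    Nat.lt_succ_of_le <|
      (Finset.single_le_sum (fun _ _ => Nat.zero_le _) (Finset.mem_univ d)).trans h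
  exact Finset.mem_image.2 ⟨fun d => ⟨α d, hle d⟩, Finset.mem_univ _, rfl⟩

theorem eq_or_eq_of_forall_le_even {D : ℕ} {i j : Fin D} {α : Fin D → ℕ}
    (h : ∀ d, α d ≤ (Pi.single j 1 + Pi.single i 2 : Fin D → ℕ) d ∧
      Even ((Pi.single j 1 + Pi.single i 2 : Fin D → ℕ) d + α d)) :
    α = Pi.single j 1 + Pi.single i 2 ∨ α = Pi.single j 1 := by
  have hoff : ∀ d ≠ i, α d = (Pi.single j 1 : Fin D → ℕ) d := fun d hd => by
    have := h d
    simp only [Pi.add_apply, Pi.single_apply, hd, if_false, add_zero, Nat.even_iff] at this ⊢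
    split_ifs at this ⊢ <;> omega
  have hi := h i
  simp only [Pi.add_apply, Pi.single_apply, if_true, Nat.even_iff] at hi
  by_cases hαi : α i = (Pi.single j 1 + Pi.single i 2 : Fin D → ℕ) i
  · left
    funext d
    rcases eq_or_ne d i with rfl | hd
    · exact hαi
    · simp [hoff d hd, hd]
  · right
    funext d
    rcases eq_or_ne d i with rfl | hd
    · simp only [Pi.add_apply, Pi.single_apply, if_true] at hαi ⊢
      split_ifs at hi hαi ⊢ <;> omega
    · exact hoff d hd

theorem prod_factorial_single_add_single {D : ℕ} (i j : Fin D) :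
    ∏ d, (((Pi.single j 1 + Pi.single i 2 : Fin D → ℕ) d)! : ℝ) =
      if i = j then 6 else 2 := by
  rcases eq_or_ne i j with rfl | hij
  · rw [← Pi.single_add, if_pos rfl,
      Finset.prod_eq_single i (fun d _ hd => by simp [hd]) (by simp)]
    simp [Nat.factorial]
  · rw [if_neg hij,
      Finset.prod_eq_mul i j hij (fun d _ hd => by simp [hd.1, hd.2]) (by simp) (by simp)]
    simp [hij, Ne.symm hij]

theorem prod_pow_single_add_single {ι R : Type*} [Fintype ι] [DecidableEq ι] [CommMonoid R]
    (x : ι → R) (i j : ι) (a b : ℕ) :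
    ∏ d, x d ^ (Pi.single j a + Pi.single i b : ι → ℕ) d = x j ^ a * x i ^ b := by
  simp only [Pi.add_apply, pow_add, Finset.prod_mul_distrib, Pi.single_apply, pow_ite, pow_zero,
    Finset.prod_ite_eq', Finset.mem_univ, if_true]

theorem sum_sq_mul_eq_sum_prod_pow {ι R : Type*} [Fintype ι] [DecidableEq ι] [CommSemiring R]
    (x : ι → R) (j : ι) :
    (∑ i, x i ^ 2) * x j =
      ∑ i, ∏ d, x d ^ (Pi.single j 1 + Pi.single i 2 : ι → ℕ) d := by
  simp_rw [prod_pow_single_add_single, pow_one, Finset.sum_mul, mul_comm]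

theorem sum_mul_integral_prod_pow_single_add_single_mul_Hb {D : ℕ} {θ : ℝ} (hθ : 0 < θ)
    (u : Fin D → ℝ) (i j : Fin D) {S : Finset (Fin D → ℕ)}
    (hS : Pi.single j 1 + Pi.single i 2 ∈ S) {c : (Fin D → ℕ) → ℝ}
    (hc : c (Pi.single j 1) = 0) :
    ∑ α ∈ S, c α * ∫ ξ : Fin D → ℝ,
        (∏ d, (ξ d - u d) ^ (Pi.single j 1 + Pi.single i 2 : Fin D → ℕ) d) *
          Hb θ α (fun d => (ξ d - u d) / √θ) =
      c (Pi.single j 1 + Pi.single i 2) * if i = j then 6 else 2 := by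
  rw [Finset.sum_eq_single_of_mem _ hS, integral_prod_pow_sub_mul_Hb_self _ _ hθ,
    prod_factorial_single_add_single]
  intro α _ hα
  rcases eq_or_ne α (Pi.single j 1) with rfl | hαj
  · rw [hc, zero_mul]
  · refine mul_eq_zero_of_right _ (integral_prod_pow_sub_mul_Hb_eq_zero _ _ _ hθ ?_)
    by_contra! h
    exact (eq_or_eq_of_forall_le_even fun d => ⟨(h d).1, Nat.not_odd_iff_even.1 (h d).2⟩).elim
      hα hαj

theorem stmt13_general (D M : ℕ) (hM : 3 ≤ M)
    (u' : Fin D → ℝ) (θ' : ℝ) (hθ' : 0 < θ')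
    (c : (Fin D → ℕ) → ℝ) (f : (Fin D → ℝ) → ℝ)
    (hf : f = fun ξ => ∑ α ∈ multiIndices D M,
      c α * Hb θ' α (fun d => (ξ d - u' d) / Real.sqrt θ'))
    (hmean : ∀ i : Fin D, c (fun k => if k = i then 1 else 0) = 0) :
    ∀ j : Fin D,
      (1 / 2 : ℝ) * ∫ ξ, (∑ i, (ξ i - u' i) ^ 2) * (ξ j - u' j) * f ξ =
        2 * c (fun k => if k = j then 3 else 0) +
          ∑ d : Fin D, c (fun k => (if k = j then 1 else 0) + (if k = d then 2 else 0)) := by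
  intro j
  have hsingle : ∀ (i : Fin D) (a : ℕ),
      (Pi.single i a : Fin D → ℕ) = fun k => if k = i then a else 0 :=
    fun i a => funext (Pi.single_apply i a)
  have hmem : ∀ i, Pi.single j 1 + Pi.single i 2 ∈ multiIndices D M := fun i =>
    mem_multiIndices.2 (by simp [Finset.sum_add_distrib]; omega)
  have hc : c (Pi.single j 1) = 0 := by rw [hsingle]; exact hmean j
  calc (1 / 2 : ℝ) * ∫ ξ, (∑ i, (ξ i - u' i) ^ 2) * (ξ j - u' j) * f ξ
      = (1 / 2) * ∑ i, c (Pi.single j 1 + Pi.single i 2) * if i = j then 6 else 2 := by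
        simp_rw [hf, sum_sq_mul_eq_sum_prod_pow,
          integral_sum_prod_pow_sub_mul_sum_Hb _ hθ',
          sum_mul_integral_prod_pow_single_add_single_mul_Hb hθ' _ _ _ (hmem _) hc]
    _ = 2 * c (Pi.single j 1 + Pi.single j 2) + ∑ i, c (Pi.single j 1 + Pi.single i 2) := by
        have hsplit : ∀ (g : ℝ) (i : Fin D),
            g * (if i = j then 6 else 2) = 2 * g + if i = j then 4 * g else 0 :=
          fun g i => by split_ifs <;> ring
        simp_rw [hsplit, Finset.sum_add_distrib, Finset.sum_ite_eq', Finset.mem_univ, if_true,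
          ← Finset.mul_sum]
        ring
    _ = _ := by simp_rw [← Pi.single_add, hsingle, Pi.add_def]

/-- the heat flux of a truncated Hermite expansion around `(u',θ')` with
vanishing first-order coefficients:
`q_j = (1/2)∫ |ξ−u'|²(ξ_j−u'_j) f dξ = 2 f_{3e_j} + Σ_d f_{e_j+2e_d}`. -/
theorem stmt13 (D M : ℕ) (hD : 1 ≤ D) (hM : 3 ≤ M)
    (u' : Fin D → ℝ) (θ' : ℝ) (hθ' : 0 < θ')
    (c : (Fin D → ℕ) → ℝ) (f : (Fin D → ℝ) → ℝ)
    (hf : f = fun ξ => ∑ α ∈ multiIndices D M,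
      c α * Hb θ' α (fun d => (ξ d - u' d) / Real.sqrt θ'))
    (hmean : ∀ i : Fin D, c (fun k => if k = i then 1 else 0) = 0) :
    ∀ j : Fin D,
      (1 / 2 : ℝ) * ∫ ξ, (∑ i, (ξ i - u' i) ^ 2) * (ξ j - u' j) * f ξ =
        2 * c (fun k => if k = j then 3 else 0) +
          ∑ d : Fin D, c (fun k => (if k = j then 1 else 0) + (if k = d then 2 else 0)) :=
  stmt13_general D M hM u' θ' hθ' c f hf hmean
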